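/- Let (s,i) be the solution of the controlled SIR system with control u, and suppose i(t) = i_c for all t in an interval (t₁,t₂), where i_c ∈ (0, i_M] is a constant. Then there is a constant k_s = s(t₁) + γ·i_c·t₁ = s(t₂) + γ·i_c·t₂ such that s(t) = k_s − γ·i_c·t on (t₁,t₂) and u(t) = β − γ/s(t) = β − γ/(k_s − γ·i_c·t) for a.e. t ∈ (t₁,t₂). Moreover, since u takes values in [0,u_max], one has s(t₁) ≤ γ/(β − u_max) and s(t₂) ≥ γ/β. -/

import Mathlib

open MeasureTheory Filter Set intervalIntegral
open scoped ENNReal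

noncomputable section

/-- A control: a measurable (essentially bounded) function with values in `[0, umax]`. -/
def IsControl (umax : ℝ) (u : ℝ → ℝ) : Prop :=
  Measurable u ∧ ∀ t : ℝ, u t ∈ Set.Icc (0 : ℝ) umax

/-- Solution of the controlled SIR system on `[0,∞)`, in integral (i.e. locally absolutely
continuous) form: `s' = -(β-u)·s·i`, `i' = (β-u)·s·i - γ·i` a.e., `s 0 = s₀`, `i 0 = i₀`. -/
def SIRSol (β γ : ℝ) (u s i : ℝ → ℝ) (s₀ i₀ : ℝ) : Prop :=
  Continuous s ∧ Continuous i ∧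
  (∀ t : ℝ, 0 ≤ t → s t = s₀ + ∫ τ in (0:ℝ)..t, -((β - u τ) * s τ * i τ)) ∧
  (∀ t : ℝ, 0 ≤ t → i t = i₀ + ∫ τ in (0:ℝ)..t, ((β - u τ) * s τ * i τ - γ * i τ))

/-- Solution of the controlled SIR system on `[0,T]`, in integral form. -/
def SIRSolOn (β γ T : ℝ) (u s i : ℝ → ℝ) (s₀ i₀ : ℝ) : Prop :=
  ContinuousOn s (Set.Icc 0 T) ∧ ContinuousOn i (Set.Icc 0 T) ∧
  (∀ t ∈ Set.Icc (0:ℝ) T, s t = s₀ + ∫ τ in (0:ℝ)..t, -((β - u τ) * s τ * i τ)) ∧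
  (∀ t ∈ Set.Icc (0:ℝ) T, i t = i₀ + ∫ τ in (0:ℝ)..t, ((β - u τ) * s τ * i τ - γ * i τ))

/-- The triangle `T = {(s,i) ∈ (0,1]² : s + i ≤ 1}`. -/
def Triangle : Set (ℝ × ℝ) :=
  {p | 0 < p.1 ∧ p.1 ≤ 1 ∧ 0 < p.2 ∧ p.2 ≤ 1 ∧ p.1 + p.2 ≤ 1}

/-- The curve `Φ_max`. -/
def PhiMax (β γ umax iM : ℝ) (x : ℝ) : ℝ :=
  if x < γ / (β - umax) then iM
  else γ / (β - umax) + iM - x + (γ / (β - umax)) * (Real.log x - Real.log (γ / (β - umax)))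

/-- The curve `Φ₀`. -/
def Phi0 (β γ iM : ℝ) (x : ℝ) : ℝ :=
  if x < γ / β then iM
  else γ / β + iM - x + (γ / β) * (Real.log x - Real.log (γ / β))

/-- The ICU (state) constraint `i(t) ≤ i_M` for all `t ≥ 0`. -/
def Admissible (iM : ℝ) (i : ℝ → ℝ) : Prop := ∀ t : ℝ, 0 ≤ t → i t ≤ iM

/-- Infinite-horizon cost `J^∞(u) = ∫₀^∞ (λ₁ u + λ₂ i) dt`, with values in `[0,∞]`. -/
def Cost (l1 l2 : ℝ) (u i : ℝ → ℝ) : ℝ≥0∞ :=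
  ∫⁻ t in Set.Ioi (0:ℝ), ENNReal.ofReal (l1 * u t + l2 * i t)

/-- Finite-horizon cost `J^T(u) = ∫₀^T (λ₁ u + λ₂ i) dt`. -/
def CostT (l1 l2 T : ℝ) (u i : ℝ → ℝ) : ℝ≥0∞ :=
  ∫⁻ t in Set.Ioc (0:ℝ) T, ENNReal.ofReal (l1 * u t + l2 * i t)

/-- The safe (no-effort) zone `A`. -/
def SafeZone (β γ iM : ℝ) : Set (ℝ × ℝ) :=
  {p | p ∈ Triangle ∧ ∃ s i : ℝ → ℝ,
    SIRSol β γ (fun _ => 0) s i p.1 p.2 ∧ Admissible iM i}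

/-- The viable (feasible) set `B`. -/
def ViableSet (β γ umax iM : ℝ) : Set (ℝ × ℝ) :=
  {p | p ∈ Triangle ∧ ∃ u s i : ℝ → ℝ, IsControl umax u ∧
    SIRSol β γ u s i p.1 p.2 ∧ Admissible iM i}

/-- Weak* convergence in `L^∞(0,∞)`: testing against every `L¹` function. -/
def WeakStarLim (un : ℕ → ℝ → ℝ) (u : ℝ → ℝ) : Prop :=
  ∀ g : ℝ → ℝ, MeasureTheory.IntegrableOn g (Set.Ioi 0) →
    Filter.Tendsto (fun n => ∫ t in Set.Ioi (0:ℝ), un n t * g t) Filter.atTop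
      (nhds (∫ t in Set.Ioi (0:ℝ), u t * g t))

/-! On a boundary arc `i ≡ i_c`, the `i`-equation forces `(β - u) s = γ` almost everywhere, which
pins down `u` and confines `s` a.e. to `[γ/β, γ/(β - u_max)]`; by continuity of `s` these bounds
hold at the endpoints. Adding the two equations, `(s + i)' = -γ i`, so `s` decreases at the constant
rate `γ i_c` along the arc. -/

theorem IsControl.intervalIntegrable {umax : ℝ} {u : ℝ → ℝ} (hu : IsControl umax u) (a b : ℝ) :
    IntervalIntegrable u volume a b := by
  refine intervalIntegrable_iff.2 <| Measure.integrableOn_of_bounded (M := umax)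
    measure_Ioc_lt_top.ne hu.1.aestronglyMeasurable (ae_of_all _ fun t => ?_)
  rw [Real.norm_eq_abs, abs_of_nonneg (hu.2 t).1]
  exact (hu.2 t).2

theorem IsControl.intervalIntegrable_sub_mul {umax : ℝ} {u w : ℝ → ℝ} (hu : IsControl umax u)
    (c : ℝ) (hw : Continuous w) (a b : ℝ) :
    IntervalIntegrable (fun τ => (c - u τ) * w τ) volume a b :=
  (intervalIntegrable_const.sub (hu.intervalIntegrable a b)).mul_continuousOn hw.continuousOn

theorem sub_eq_integral_of_forall_eq_add_integral {x f : ℝ → ℝ} {x₀ : ℝ}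
    (hx : ∀ t, 0 ≤ t → x t = x₀ + ∫ τ in (0:ℝ)..t, f τ)
    (hf : ∀ a b, IntervalIntegrable f volume a b) {a b : ℝ} (ha : 0 ≤ a) (hb : 0 ≤ b) :
    x b - x a = ∫ τ in a..b, f τ := by
  rw [hx b hb, hx a ha, ← intervalIntegral.integral_interval_sub_left (hf 0 b) (hf 0 a)]
  ring

/-- Lebesgue differentiation: the primitive vanishes identically, so its a.e. derivative does. -/
theorem ae_eq_zero_of_forall_intervalIntegral_eq_zero {E : Type*} [NormedAddCommGroup E]
    [NormedSpace ℝ E] [CompleteSpace E] {f : ℝ → E} {a b : ℝ}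
    (hf : IntervalIntegrable f volume a b) (h : ∀ t ∈ Icc a b, ∫ τ in a..t, f τ = 0) :
    ∀ᵐ x, x ∈ Ioo a b → f x = 0 := by
  filter_upwards [hf.ae_hasDerivAt_integral] with x hx hxab
  have hderiv := hx (Ioo_subset_Icc_self.trans Icc_subset_uIcc hxab) a left_mem_uIcc
  have hzero : (fun t => ∫ τ in a..t, f τ) =ᶠ[nhds x] fun _ => 0 :=
    Filter.eventually_of_mem (Ioo_mem_nhds hxab.1 hxab.2) fun t ht => h t (Ioo_subset_Icc_self ht)
  exact hderiv.unique ((hasDerivAt_const x (0 : E)).congr_of_eventuallyEq hzero)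

theorem closure_subset_of_ae_mem {X : Type*} [TopologicalSpace X] [MeasurableSpace X]
    {μ : Measure X} [μ.IsOpenPosMeasure] {U F : Set X} (hU : IsOpen U) (hF : IsClosed F)
    (h : ∀ᵐ x ∂μ, x ∈ U → x ∈ F) : closure U ⊆ F := by
  have hdense : U ⊆ closure (U ∩ {x | x ∈ U → x ∈ F}) :=
    (Measure.dense_of_ae h).open_subset_closure_inter hU
  refine (closure_mono hdense).trans ?_
  rw [closure_closure]
  exact hF.closure_subset_iff.2 fun x hx => hx.2 hx.1

theorem eq_sub_div_of_sub_mul_eq {β γ u s : ℝ} (hγ : γ ≠ 0) (h : (β - u) * s = γ) :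
    u = β - γ / s := by
  have hs : s ≠ 0 := by rintro rfl; simp_all
  rw [← h]
  field_simp
  ring

theorem mem_Icc_of_sub_mul_eq {β γ umax u s : ℝ} (hγ : 0 ≤ γ) (hu : u ∈ Icc 0 umax)
    (humaxβ : umax < β) (h : (β - u) * s = γ) : s ∈ Icc (γ / β) (γ / (β - umax)) := by
  have hβu : 0 < β - u := by linarith [hu.2]
  have hs : s = γ / (β - u) := by rw [← h]; field_simp
  rw [hs]
  exact ⟨div_le_div_of_nonneg_left hγ hβu (by linarith [hu.1]),
    div_le_div_of_nonneg_left hγ (by linarith) (by linarith [hu.2])⟩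

namespace SIRSol

variable {β γ umax : ℝ} {u s i : ℝ → ℝ} {s₀ i₀ : ℝ}

theorem intervalIntegrable_susceptible_rhs (hsol : SIRSol β γ u s i s₀ i₀)
    (hu : IsControl umax u) (a b : ℝ) :
    IntervalIntegrable (fun τ => -((β - u τ) * s τ * i τ)) volume a b := by
  simpa only [mul_assoc, Pi.neg_def] using
    (hu.intervalIntegrable_sub_mul β (w := fun τ => s τ * i τ) (hsol.1.mul hsol.2.1) a b).neg

theorem intervalIntegrable_infected_rhs (hsol : SIRSol β γ u s i s₀ i₀)
    (hu : IsControl umax u) (a b : ℝ) :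
    IntervalIntegrable (fun τ => (β - u τ) * s τ * i τ - γ * i τ) volume a b := by
  simpa only [mul_assoc] using
    (hu.intervalIntegrable_sub_mul β (w := fun τ => s τ * i τ) (hsol.1.mul hsol.2.1) a b).sub
      ((hsol.2.1.intervalIntegrable a b).const_mul γ)

theorem susceptible_sub (hsol : SIRSol β γ u s i s₀ i₀) (hu : IsControl umax u) {a b : ℝ}
    (ha : 0 ≤ a) (hb : 0 ≤ b) :
    s b - s a = ∫ τ in a..b, -((β - u τ) * s τ * i τ) :=
  sub_eq_integral_of_forall_eq_add_integral hsol.2.2.1 (hsol.intervalIntegrable_susceptible_rhs hu)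
    ha hb

theorem infected_sub (hsol : SIRSol β γ u s i s₀ i₀) (hu : IsControl umax u) {a b : ℝ}
    (ha : 0 ≤ a) (hb : 0 ≤ b) :
    i b - i a = ∫ τ in a..b, ((β - u τ) * s τ * i τ - γ * i τ) :=
  sub_eq_integral_of_forall_eq_add_integral hsol.2.2.2 (hsol.intervalIntegrable_infected_rhs hu)
    ha hb

theorem susceptible_sub_add_infected_sub (hsol : SIRSol β γ u s i s₀ i₀)
    (hu : IsControl umax u) {a b : ℝ} (ha : 0 ≤ a) (hb : 0 ≤ b) :
    (s b - s a) + (i b - i a) = -γ * ∫ τ in a..b, i τ := by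
  rw [hsol.susceptible_sub hu ha hb, hsol.infected_sub hu ha hb,
    ← intervalIntegral.integral_add (hsol.intervalIntegrable_susceptible_rhs hu a b)
      (hsol.intervalIntegrable_infected_rhs hu a b), ← intervalIntegral.integral_const_mul]
  congr 1 with τ
  ring

theorem ae_sub_mul_eq_of_eqOn_infected (hsol : SIRSol β γ u s i s₀ i₀) (hu : IsControl umax u)
    {a b ic : ℝ} (ha : 0 ≤ a) (hic : ic ≠ 0) (hi : EqOn i (fun _ => ic) (Icc a b)) :
    ∀ᵐ t, t ∈ Ioo a b → (β - u t) * s t = γ := by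
  have hint : ∀ t ∈ Icc a b, ∫ τ in a..t, ((β - u τ) * s τ - γ) = 0 := by
    intro t ht
    have hsub := hsol.infected_sub hu ha (ha.trans ht.1)
    rw [hi ht, hi (left_mem_Icc.2 (ht.1.trans ht.2)), sub_self,
      intervalIntegral.integral_congr (g := fun τ => ic * ((β - u τ) * s τ - γ))] at hsub
    · rw [intervalIntegral.integral_const_mul] at hsub
      exact (mul_eq_zero.1 hsub.symm).resolve_left hic
    · intro τ hτ
      rw [uIcc_of_le ht.1] at hτ
      beta_reduce
      rw [hi ⟨hτ.1, hτ.2.trans ht.2⟩]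
      ring
  filter_upwards [ae_eq_zero_of_forall_intervalIntegral_eq_zero
    ((hu.intervalIntegrable_sub_mul β hsol.1 a b).sub intervalIntegrable_const) hint] with t ht hab
  exact sub_eq_zero.1 (ht hab)

end SIRSol

theorem statement17_general (β γ umax iM : ℝ) (hγ : 0 < γ)
    (humaxβ : umax < β)
    (u : ℝ → ℝ) (hu : IsControl umax u)
    (i₀ s₀ : ℝ)
    (s i : ℝ → ℝ) (hsol : SIRSol β γ u s i s₀ i₀)
    (t₁ t₂ : ℝ) (ht₁ : 0 ≤ t₁) (ht₁₂ : t₁ < t₂)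
    (ic : ℝ) (hic : ic ∈ Set.Ioc (0:ℝ) iM)
    (hconst : ∀ t ∈ Set.Ioo t₁ t₂, i t = ic) :
    ∃ ks : ℝ, ks = s t₁ + γ * ic * t₁ ∧ ks = s t₂ + γ * ic * t₂ ∧
      (∀ t ∈ Set.Ioo t₁ t₂, s t = ks - γ * ic * t) ∧
      (∀ᵐ t : ℝ, t ∈ Set.Ioo t₁ t₂ →
        u t = β - γ / s t ∧ u t = β - γ / (ks - γ * ic * t)) ∧
      s t₁ ≤ γ / (β - umax) ∧ γ / β ≤ s t₂ := by
  have hi : EqOn i (fun _ => ic) (Icc t₁ t₂) :=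
    EqOn.of_subset_closure hconst hsol.2.1.continuousOn continuousOn_const Ioo_subset_Icc_self
      (closure_Ioo ht₁₂.ne).ge
  have hs : ∀ t ∈ Icc t₁ t₂, s t = s t₁ + γ * ic * t₁ - γ * ic * t := by
    intro t ht
    have hsum := hsol.susceptible_sub_add_infected_sub hu ht₁ (ht₁.trans ht.1)
    rw [hi ht, hi (left_mem_Icc.2 ht₁₂.le), intervalIntegral.integral_congr (g := fun _ => ic)
      (hi.mono (uIcc_of_le ht.1 ▸ Icc_subset_Icc_right ht.2)), intervalIntegral.integral_const,
      smul_eq_mul] at hsum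
    linarith
  have hae := hsol.ae_sub_mul_eq_of_eqOn_infected hu ht₁ hic.1.ne' hi
  have hbounds : Icc t₁ t₂ ⊆ {t | s t ∈ Icc (γ / β) (γ / (β - umax))} := by
    rw [← closure_Ioo ht₁₂.ne]
    refine closure_subset_of_ae_mem (μ := volume) isOpen_Ioo (isClosed_Icc.preimage hsol.1) ?_
    filter_upwards [hae] with t ht htI using mem_Icc_of_sub_mul_eq hγ.le (hu.2 t) humaxβ (ht htI)
  refine ⟨_, rfl, by linarith [hs t₂ (right_mem_Icc.2 ht₁₂.le)],
    fun t ht => hs t (Ioo_subset_Icc_self ht), ?_, (hbounds (left_mem_Icc.2 ht₁₂.le)).2,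
    (hbounds (right_mem_Icc.2 ht₁₂.le)).1⟩
  filter_upwards [hae] with t ht htI
  have hut := eq_sub_div_of_sub_mul_eq hγ.ne' (ht htI)
  exact ⟨hut, by rwa [← hs t (Ioo_subset_Icc_self htI)]⟩

/-- Characterization of boundary (constant-`i`) arcs: if `i ≡ i_c` on `(t₁,t₂)`, then `s` is
affine there, `u = β - γ/s` a.e., and `s(t₁) ≤ γ/(β-u_max)`, `s(t₂) ≥ γ/β`. -/
theorem statement17 (β γ umax iM : ℝ) (hβ : 0 < β) (hγ : 0 < γ)
    (humax : 0 < umax) (humaxβ : umax < β) (hiM : iM ∈ Set.Ioo (0:ℝ) 1)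
    (u : ℝ → ℝ) (hu : IsControl umax u)
    (i₀ s₀ : ℝ) (hi₀ : i₀ ∈ Set.Ioo (0:ℝ) 1) (hs₀ : s₀ ∈ Set.Ioc (0:ℝ) (1 - i₀))
    (s i : ℝ → ℝ) (hsol : SIRSol β γ u s i s₀ i₀)
    (t₁ t₂ : ℝ) (ht₁ : 0 ≤ t₁) (ht₁₂ : t₁ < t₂)
    (ic : ℝ) (hic : ic ∈ Set.Ioc (0:ℝ) iM)
    (hconst : ∀ t ∈ Set.Ioo t₁ t₂, i t = ic) :
    ∃ ks : ℝ, ks = s t₁ + γ * ic * t₁ ∧ ks = s t₂ + γ * ic * t₂ ∧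
      (∀ t ∈ Set.Ioo t₁ t₂, s t = ks - γ * ic * t) ∧
      (∀ᵐ t : ℝ, t ∈ Set.Ioo t₁ t₂ →
        u t = β - γ / s t ∧ u t = β - γ / (ks - γ * ic * t)) ∧
      s t₁ ≤ γ / (β - umax) ∧ γ / β ≤ s t₂ :=
  statement17_general β γ umax iM hγ humaxβ u hu i₀ s₀ s i hsol t₁ t₂ ht₁ ht₁₂ ic hic hconst
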